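/- Under the same setup, if x satisfies f^[k](x) = x for k ≥ 1 and ω = exp(2πi/k), then for each m ∈ {0,...,k-1} the matrix ρ_m = (1/k) ∑_{j=0}^{k-1} ω^{m j} E_{f^[j](x), f^[j](x)} satisfies E(ρ_m) = ω^{-m} ρ_m, i.e. ρ_m is an eigenvector of the channel with eigenvalue ω^{-m}, a k-th root of unity. -/

import Mathlib

open Matrix BigOperators Complex

lemma stdBasis_conjT {N : ℕ} [NeZero N] (a b : ZMod N) :
    (Matrix.single a b (1 : ℂ))ᴴ = Matrix.single b a 1 := by
  ext i j
  simp [Matrix.single, Matrix.conjTranspose_apply, and_comm]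

theorem channel_cycle_eigenvector (N n : ℕ) [NeZero N] (f : ZMod N → ZMod N)
    (S : Fin n → Finset (ZMod N))
    (hdisj : ∀ j k : Fin n, j ≠ k → Disjoint (S j) (S k))
    (hcover : ∀ x : ZMod N, ∃ j, x ∈ S j)
    (hinj : ∀ j, Set.InjOn f (S j))
    (K : Fin n → Matrix (ZMod N) (ZMod N) ℂ)
    (hK : ∀ j, K j = ∑ i ∈ S j, Matrix.single (f i) i (1 : ℂ))
    (x : ZMod N) (k : ℕ) (hk : 1 ≤ k) (hcyc : f^[k] x = x)
    (ω : ℂ) (hω : ω = Complex.exp (2 * Real.pi * Complex.I / k))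
    (m : ℕ) (hm : m < k)
    (ρm : Matrix (ZMod N) (ZMod N) ℂ)
    (hρm : ρm = (1 / (k : ℂ)) •
      ∑ j ∈ Finset.range k,
        ω ^ (m * j) • Matrix.single (f^[j] x) (f^[j] x) (1 : ℂ)) :
    ∑ j : Fin n, K j * ρm * (K j)ᴴ = ω ^ (-(m : ℤ)) • ρm := by
  have hωne : ω ≠ 0 := by rw [hω]; exact Complex.exp_ne_zero _
  have hkC : (k : ℂ) ≠ 0 := Nat.cast_ne_zero.mpr (by omega)
  have hωk : ω ^ k = 1 := by
    rw [hω, ← Complex.exp_nat_mul]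
    rw [show (k : ℂ) * (2 * Real.pi * Complex.I / k) = 2 * Real.pi * Complex.I by
      field_simp]
    exact Complex.exp_two_pi_mul_I
  have hE : ∀ y : ZMod N, ∑ j : Fin n, K j * Matrix.single y y (1:ℂ) * (K j)ᴴ
      = Matrix.single (f y) (f y) 1 := by
    intro y
    have step : ∀ j : Fin n, K j * Matrix.single y y (1:ℂ) * (K j)ᴴ
        = if y ∈ S j then Matrix.single (f y) (f y) 1 else 0 := by
      intro j
      rw [hK j]
      have h1 : (∑ i ∈ S j, Matrix.single (f i) i (1 : ℂ)) *
          Matrix.single y y (1:ℂ)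
          = if y ∈ S j then Matrix.single (f y) y 1 else 0 := by
        rw [Finset.sum_mul]
        rw [Finset.sum_congr rfl (fun i _ => show
            Matrix.single (f i) i (1:ℂ) * Matrix.single y y 1
            = if i = y then Matrix.single (f y) y 1 else 0 by
          split
          · rename_i h; subst h; rw [Matrix.single_mul_single_same, one_mul]
          · rename_i h; exact Matrix.single_mul_single_of_ne _ _ _ _ h _)]
        simp [Finset.sum_ite_eq']
      rw [h1]
      split
      · rename_i hy
        rw [Matrix.conjTranspose_sum]
        rw [Finset.sum_congr rfl (fun i _ => stdBasis_conjT (f i) i)]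
        rw [Finset.mul_sum]
        rw [Finset.sum_congr rfl (fun i _ => show
            Matrix.single (f y) y (1:ℂ) * Matrix.single i (f i) 1
            = if i = y then Matrix.single (f y) (f y) 1 else 0 by
          split
          · rename_i h; subst h; rw [Matrix.single_mul_single_same, one_mul]
          · rename_i h; exact Matrix.single_mul_single_of_ne _ _ _ _ (Ne.symm h) _)]
        simp [Finset.sum_ite_eq', hy]
      · simp
    rw [Finset.sum_congr rfl (fun j _ => step j)]
    obtain ⟨j0, hj0⟩ := hcover y
    rw [Finset.sum_eq_single j0]
    · simp [hj0]
    · intro j _ hj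
      have : y ∉ S j := fun hy => (Finset.disjoint_left.mp (hdisj j j0 hj) hy) hj0
      simp [this]
    · simp
  have key : ∑ j : Fin n, K j * ρm * (K j)ᴴ
      = (1 / (k : ℂ)) • ∑ i ∈ Finset.range k,
          ω ^ (m * i) • Matrix.single (f^[i+1] x) (f^[i+1] x) 1 := by
    have hrep : ∀ i : ℕ, Matrix.single (f^[i+1] x) (f^[i+1] x) (1:ℂ)
        = ∑ j : Fin n, K j * Matrix.single (f^[i] x) (f^[i] x) 1 * (K j)ᴴ := by
      intro i
      rw [hE, Function.iterate_succ_apply']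
    rw [Finset.sum_congr rfl (fun i _ => by rw [hrep i] :
      ∀ i ∈ Finset.range k, ω ^ (m * i) •
          Matrix.single (f^[i+1] x) (f^[i+1] x) (1:ℂ)
        = ω ^ (m * i) • ∑ j : Fin n,
            K j * Matrix.single (f^[i] x) (f^[i] x) 1 * (K j)ᴴ)]
    simp only [hρm, Matrix.mul_smul, Matrix.smul_mul, Finset.mul_sum, Finset.sum_mul,
      Finset.smul_sum]
    rw [Finset.sum_comm]
  rw [key, hρm]
  rw [_root_.zpow_neg, zpow_natCast]
  rw [smul_comm ((ω ^ m)⁻¹) ((1:ℂ)/k)]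
  congr 1
  rw [eq_inv_smul_iff₀ (pow_ne_zero m hωne)]
  rw [Finset.smul_sum]
  rw [Finset.sum_congr rfl (fun i _ => by
    rw [smul_smul, ← pow_add, show m + m * i = m * (i + 1) by ring] :
    ∀ i ∈ Finset.range k, ω ^ m • ω ^ (m * i) •
        Matrix.single (f^[i+1] x) (f^[i+1] x) (1:ℂ)
      = ω ^ (m * (i+1)) • Matrix.single (f^[i+1] x) (f^[i+1] x) 1)]
  have h1 := Finset.sum_range_succ' (fun i => ω ^ (m * i) •
    Matrix.single (f^[i] x) (f^[i] x) (1:ℂ)) k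
  have h2 := Finset.sum_range_succ (fun i => ω ^ (m * i) •
    Matrix.single (f^[i] x) (f^[i] x) (1:ℂ)) k
  have hgk : ω ^ (m * k) • Matrix.single (f^[k] x) (f^[k] x) (1:ℂ)
      = ω ^ (m * 0) • Matrix.single (f^[0] x) (f^[0] x) 1 := by
    rw [hcyc, mul_comm m k, pow_mul, hωk, one_pow]
    simp
  have h3 := h1.symm.trans h2
  simp only [hgk] at h3
  exact add_right_cancel h3
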